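/- arXiv:1302.3064 — 2 statements merged into one kernel-verified Lean document; each statement's English description precedes it below -/
import Mathlib

section
/- For any graph G, the induced matching number of the full whisker graph equals the independence number of G: im(W(G)) = α(G). -/
open scoped Classical

noncomputable section

/-! ## Simplicial complexes and Castelnuovo–Mumford regularity -/

/-- A (abstract) simplicial complex on the vertex type `V`, given as a
downward closed family of finsets. -/
def IsComplex {V : Type} (Δ : Finset V → Prop) : Prop :=
  ∀ ⦃F G : Finset V⦄, Δ F → G ⊆ F → Δ G

/-- The faces of cardinality `n` of a family `Δ` (faces of card `n` are the
`(n-1)`-dimensional simplices). -/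
def Faces {V : Type} (Δ : Finset V → Prop) (n : ℕ) : Type :=
  {F : Finset V // Δ F ∧ F.card = n}

/-- The simplicial boundary map of the (augmented) chain complex of `Δ` over
a field `k`, from chains on faces of card `n+1` to chains on faces of card `n`,
with signs determined by a linear order on the vertices. -/
def cxBoundary {V : Type} (k : Type) [Field k] [LinearOrder V]
    (Δ : Finset V → Prop) (n : ℕ) :
    (Faces Δ (n + 1) →₀ k) →ₗ[k] (Faces Δ n →₀ k) :=
  Finsupp.lsum k fun F => LinearMap.toSpanSingleton k _
    (∑ x ∈ F.1.attach,
      ((-1 : k) ^ (F.1.filter (fun z => z < x.1)).card) •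
        (if h : Δ (F.1.erase x.1) ∧ (F.1.erase x.1).card = n then
          Finsupp.single (⟨F.1.erase x.1, h⟩ : Faces Δ n) (1 : k) else 0))

/-- Cycles in chain degree `j` (faces of card `j`); in the bottom degree every
chain is a cycle (augmented complex). -/
def cxCycles {V : Type} (k : Type) [Field k] [LinearOrder V]
    (Δ : Finset V → Prop) : (j : ℕ) → Submodule k (Faces Δ j →₀ k)
  | 0 => ⊤
  | (n + 1) => LinearMap.ker (cxBoundary k Δ n)

/-- Nonvanishing of the reduced homology `H̃_{j-1}(Δ; k)`: there is a cycle
supported on faces of cardinality `j` that is not a boundary. -/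
def HNontrivial {V : Type} (k : Type) [Field k] [LinearOrder V]
    (Δ : Finset V → Prop) (j : ℕ) : Prop :=
  ¬ (cxCycles k Δ j ≤ LinearMap.range (cxBoundary k Δ j))

/-- The induced subcomplex `Δ[S]` on a set `S` of vertices. -/
def restrictC {V : Type} (Δ : Finset V → Prop) (S : Set V) : Finset V → Prop :=
  fun F => ↑F ⊆ S ∧ Δ F

/-- The Castelnuovo–Mumford regularity of `Δ` over the field `k`:
the largest `j` such that `H̃_{j-1}(Δ[S]; k) ≠ 0` for some subset `S` of the
vertices. -/
def regC {V : Type} [Fintype V] (k : Type) [Field k] (Δ : Finset V → Prop) : ℕ :=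
  letI : LinearOrder V :=
    LinearOrder.lift' (Fintype.equivFin V) (Fintype.equivFin V).injective
  sSup {j : ℕ | ∃ S : Set V, HNontrivial k (restrictC Δ S) j}

/-- The deletion `del_Δ(x)`. -/
def delC {V : Type} (Δ : Finset V → Prop) (x : V) : Finset V → Prop :=
  fun F => Δ F ∧ x ∉ F

/-- The link `lk_Δ(x)`. -/
def lkC {V : Type} (Δ : Finset V → Prop) (x : V) : Finset V → Prop :=
  fun F => x ∉ F ∧ Δ (insert x F)

/-! ## Independence complexes and regularity of graphs -/

/-- The independence complex of a graph, as a family of finsets. -/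
def indepFaces {V : Type} (G : SimpleGraph V) : Finset V → Prop :=
  fun F => ∀ u ∈ F, ∀ v ∈ F, ¬ G.Adj u v

/-- The regularity `reg(G)` of a graph: the regularity of its independence
complex over `k`. -/
def gReg {V : Type} [Fintype V] (k : Type) [Field k] (G : SimpleGraph V) : ℕ :=
  regC k (indepFaces G)

/-- The regularity of the subgraph of `G` induced on the vertex set `S`. -/
def gRegOn {V : Type} [Fintype V] (k : Type) [Field k] (G : SimpleGraph V)
    (S : Set V) : ℕ :=
  regC k (restrictC (indepFaces G) S)

/-! ## Geometric realization, suspension, wedge -/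

/-- The geometric realization of a family of finsets `Δ` on a finite vertex
type: convex combinations of vertices supported on a face. -/
abbrev cxSpace {V : Type} [Fintype V] (Δ : Finset V → Prop) : Type :=
  {f : V → ℝ // (∃ F : Finset V, Δ F ∧ ∀ v, f v ≠ 0 → v ∈ F) ∧
    (∀ v, 0 ≤ f v) ∧ ∑ v, f v = 1}

/-- Relation generating the unreduced suspension: the two ends of the cylinder
are collapsed to two (always present) poles. -/
def suspRel (X : Type) : (X × unitInterval ⊕ Bool) → (X × unitInterval ⊕ Bool) → Prop
  | Sum.inl (x, t), Sum.inr b => (t = 0 ∧ b = false) ∨ (t = 1 ∧ b = true)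
  | _, _ => False

/-- The unreduced suspension `Σ X` (the join of `X` with a two-point space). -/
abbrev Susp (X : Type) [TopologicalSpace X] : Type := Quot (suspRel X)

/-- Relation generating the wedge sum with respect to chosen basepoints. -/
def wedgeRel (X Y : Type) (x₀ : X) (y₀ : Y) : X ⊕ Y → X ⊕ Y → Prop :=
  fun p q => p = Sum.inl x₀ ∧ q = Sum.inr y₀

/-- The wedge sum `X ∨ Y` with respect to chosen basepoints. -/
abbrev Wedge (X Y : Type) [TopologicalSpace X] [TopologicalSpace Y]
    (x₀ : X) (y₀ : Y) : Type := Quot (wedgeRel X Y x₀ y₀)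

/-! ## Graph invariants -/

/-- `M` is an induced matching of `G`: a set of edges, pairwise with distinct
endpoints and with no edge of `G` between the endpoints of distinct members. -/
def IsInducedMatching {V : Type} (G : SimpleGraph V) (M : Finset (V × V)) : Prop :=
  (∀ p ∈ M, G.Adj p.1 p.2) ∧
    ∀ p ∈ M, ∀ q ∈ M, p ≠ q →
      p.1 ≠ q.1 ∧ p.1 ≠ q.2 ∧ p.2 ≠ q.1 ∧ p.2 ≠ q.2 ∧
      ¬ G.Adj p.1 q.1 ∧ ¬ G.Adj p.1 q.2 ∧ ¬ G.Adj p.2 q.1 ∧ ¬ G.Adj p.2 q.2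

/-- The induced matching number `im(G)`. -/
def inducedMatchingNumber {V : Type} (G : SimpleGraph V) : ℕ :=
  sSup {n : ℕ | ∃ M : Finset (V × V), IsInducedMatching G M ∧ M.card = n}

/-- The independence number `α(G)`. -/
def indepNumber {V : Type} (G : SimpleGraph V) : ℕ :=
  sSup {n : ℕ | ∃ s : Finset V, (∀ u ∈ s, ∀ v ∈ s, ¬ G.Adj u v) ∧ s.card = n}

/-- The decycling number `∇(G)`: the least size of a set of vertices whose
removal leaves an acyclic graph. -/
def decyclingNumber {V : Type} [Fintype V] (G : SimpleGraph V) : ℕ :=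
  sInf {n : ℕ | ∃ D : Finset V, D.card = n ∧
    (G.induce {v : V | v ∉ D}).IsAcyclic}

/-- `K` contains an induced cycle on `n` vertices. -/
def HasInducedCycle {V : Type} (K : SimpleGraph V) (n : ℕ) : Prop :=
  ∃ f : Fin n ↪ V, ∀ i j : Fin n,
    K.Adj (f i) (f j) ↔ ((j : ℕ) = ((i : ℕ) + 1) % n ∨ (i : ℕ) = ((j : ℕ) + 1) % n)

/-- A graph is cochordal if its complement is chordal, i.e. the complement has
no induced cycle of length at least `4`. -/
def Cochordal {V : Type} (H : SimpleGraph V) : Prop :=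
  ∀ n : ℕ, 4 ≤ n → ¬ HasInducedCycle Hᶜ n

/-- The cochordal cover number `cochord(G)`: the least number of cochordal
subgraphs of `G` whose edge sets cover the edges of `G`. -/
def cochordCover {V : Type} (G : SimpleGraph V) : ℕ :=
  sInf {r : ℕ | ∃ H : Fin r → SimpleGraph V,
    (∀ i, H i ≤ G ∧ Cochordal (H i)) ∧ ∀ u v, G.Adj u v → ∃ i, (H i).Adj u v}

/-- The graph `G*` on the edge set of `G`: two edges are adjacent iff the
subgraph induced by their endpoints is `2K₂` (disjoint, with no cross edges). -/
def starGraph {V : Type} (G : SimpleGraph V) : SimpleGraph G.edgeSet :=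
  SimpleGraph.fromRel fun e f =>
    ∀ a ∈ (e.1 : Sym2 V), ∀ b ∈ (f.1 : Sym2 V), a ≠ b ∧ ¬ G.Adj a b

/-- The chromatic number, as a natural number. -/
def chromNum {W : Type} (H : SimpleGraph W) : ℕ :=
  sInf {n : ℕ | ∃ c : W → Fin n, ∀ u v, H.Adj u v → c u ≠ c v}

/-- The clique number `ω`. -/
def cliqueNum {W : Type} (H : SimpleGraph W) : ℕ :=
  sSup {n : ℕ | ∃ s : Finset W, H.IsNClique n s}

/-- A graph is perfect if every induced subgraph has chromatic number equal to
its clique number. -/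
def IsPerfect {W : Type} (H : SimpleGraph W) : Prop :=
  ∀ A : Set W, chromNum (H.induce A) = cliqueNum (H.induce A)

/-! ## Lozin transform, triple subdivision, whiskers -/

/-- Generating relation for the Lozin transform `L_x(G; Y, Z)`: delete `x`,
add the path `y(=0) - a(=1) - b(=2) - z(=3)` on four new vertices, join `y`
to every vertex of `Y` and `z` to every vertex of `Z`. -/
def lozinRel {V : Type} (G : SimpleGraph V) (x : V) (Y Z : Set V) :
    ({w : V // w ≠ x} ⊕ Fin 4) → ({w : V // w ≠ x} ⊕ Fin 4) → Prop
  | Sum.inl u, Sum.inl w => G.Adj u.1 w.1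
  | Sum.inl u, Sum.inr i => (i = 0 ∧ u.1 ∈ Y) ∨ (i = 3 ∧ u.1 ∈ Z)
  | Sum.inr i, Sum.inr j => (i : ℕ) + 1 = (j : ℕ)
  | _, _ => False

/-- The Lozin transform `L_x(G; Y, Z)` of `G` at the vertex `x`. -/
def lozinModel {V : Type} (G : SimpleGraph V) (x : V) (Y Z : Set V) :
    SimpleGraph ({w : V // w ≠ x} ⊕ Fin 4) :=
  SimpleGraph.fromRel (lozinRel G x Y Z)

/-- `{Y, Z}` is a partition of the open neighborhood of `x`. -/
def IsLozinPartition {V : Type} (G : SimpleGraph V) (x : V) (Y Z : Set V) : Prop :=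
  Y ∪ Z = G.neighborSet x ∧ Disjoint Y Z

/-- Generating relation for the triple subdivision of the edge `(u,v)`:
the edge `uv` is removed and replaced by the path `u - y(=0) - a(=1) - b(=2) - v`. -/
def tripleSubRel {V : Type} (G : SimpleGraph V) (u v : V) :
    (V ⊕ Fin 3) → (V ⊕ Fin 3) → Prop
  | Sum.inl a, Sum.inl b => G.Adj a b ∧ ¬(a = u ∧ b = v) ∧ ¬(a = v ∧ b = u)
  | Sum.inl a, Sum.inr i => (a = u ∧ i = 0) ∨ (a = v ∧ i = 2)
  | Sum.inr i, Sum.inr j => (i : ℕ) + 1 = (j : ℕ)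
  | _, _ => False

/-- The triple subdivision `L(G; e)` of `G` at the edge `e = (u,v)`. -/
def tripleSub {V : Type} (G : SimpleGraph V) (u v : V) : SimpleGraph (V ⊕ Fin 3) :=
  SimpleGraph.fromRel (tripleSubRel G u v)

/-- Generating relation for the whisker `W_S(G)`: attach a new pendant vertex
to each vertex of `S`. -/
def whiskerSRel {V : Type} (G : SimpleGraph V) (S : Finset V) :
    (V ⊕ {s : V // s ∈ S}) → (V ⊕ {s : V // s ∈ S}) → Prop
  | Sum.inl a, Sum.inl b => G.Adj a b
  | Sum.inl a, Sum.inr s => a = s.1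
  | _, _ => False

/-- The whisker graph `W_S(G)` on `V ⊕ S`. -/
def whiskerS {V : Type} (G : SimpleGraph V) (S : Finset V) :
    SimpleGraph (V ⊕ {s : V // s ∈ S}) :=
  SimpleGraph.fromRel (whiskerSRel G S)

/-- Generating relation for the full whisker `W(G)`: attach a pendant vertex
to every vertex. -/
def whiskerRel {V : Type} (G : SimpleGraph V) : (V ⊕ V) → (V ⊕ V) → Prop
  | Sum.inl a, Sum.inl b => G.Adj a b
  | Sum.inl a, Sum.inr b => a = b
  | _, _ => False

/-- The full whisker graph `W(G)` on `V ⊕ V`. -/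
def whiskerGraph {V : Type} (G : SimpleGraph V) : SimpleGraph (V ⊕ V) :=
  SimpleGraph.fromRel (whiskerRel G)

/-! ## Vertex decomposability -/

/-- The closed neighborhood of `x` inside the finset `A`. -/
def closedNbrOn {V : Type} (G : SimpleGraph V) (A : Finset V) (x : V) : Finset V :=
  A.filter fun z => z = x ∨ G.Adj x z

/-- `T` is an independent set of `G`. -/
def IsIndepFinset {V : Type} (G : SimpleGraph V) (T : Finset V) : Prop :=
  ∀ u ∈ T, ∀ v ∈ T, ¬ G.Adj u v

/-- `x` is a shedding vertex of the induced subgraph `G[A]`. -/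
def IsSheddingOn {V : Type} (G : SimpleGraph V) (A : Finset V) (x : V) : Prop :=
  ∀ T ⊆ A \ closedNbrOn G A x, IsIndepFinset G T →
    ∃ w ∈ A, G.Adj x w ∧ IsIndepFinset G (insert w T)

/-- Vertex decomposability of the induced subgraph `G[A]`. -/
def VDOn {V : Type} (G : SimpleGraph V) : Finset V → Prop := fun A =>
  (∀ u ∈ A, ∀ v ∈ A, ¬ G.Adj u v) ∨
    ∃ x : {y : V // y ∈ A}, IsSheddingOn G A x.1 ∧
      VDOn G (A.erase x.1) ∧ VDOn G (A \ closedNbrOn G A x.1)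
termination_by A => A.card
decreasing_by
  · exact Finset.card_erase_lt_of_mem x.2
  · refine Finset.card_lt_card ?_
    refine (Finset.ssubset_iff_of_subset Finset.sdiff_subset).2 ⟨x.1, x.2, ?_⟩
    simp [closedNbrOn, x.2]


/-
Each edge of `W(G)` has an endpoint in `V`, because the pendant vertices `v′` are adjacent only
to `v`. Picking that endpoint sends an induced matching of `W(G)` injectively onto an independent
set of `G`. Conversely the pendant edges `vv′` at the vertices of an independent set of `G` form
an induced matching of `W(G)`.
-/

section InducedMatching

variable {U W : Type} {H : SimpleGraph W} {M : Finset (W × W)}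

theorem IsInducedMatching.injOn_of_endpoint (hM : IsInducedMatching H M) {f : U → W}
    {g : W × W → U} (hg : ∀ p ∈ M, f (g p) = p.1 ∨ f (g p) = p.2) : Set.InjOn g M := by
  intro p hp q hq hpq
  by_contra hne
  obtain ⟨h11, h12, h21, h22, -⟩ := hM.2 p hp q hq hne
  rcases hg p hp with hp' | hp' <;> rcases hg q hq with hq' | hq' <;>
    rw [hpq, hq'] at hp' <;> simp_all

theorem IsInducedMatching.isIndepFinset_image {G : SimpleGraph U} (φ : G →g H)
    (hM : IsInducedMatching H M) {g : W × W → U}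
    (hg : ∀ p ∈ M, φ (g p) = p.1 ∨ φ (g p) = p.2) : IsIndepFinset G (M.image g) := by
  simp only [IsIndepFinset, Finset.mem_image]
  rintro _ ⟨p, hp, rfl⟩ _ ⟨q, hq, rfl⟩ hadj
  by_cases hpq : p = q
  · subst hpq
    exact G.loopless.irrefl _ hadj
  obtain ⟨-, -, -, -, h11, h12, h21, h22⟩ := hM.2 p hp q hq hpq
  have hφ := φ.map_adj hadj
  rcases hg p hp with hp' | hp' <;> rcases hg q hq with hq' | hq' <;>
    rw [hp', hq'] at hφ <;> contradiction

end InducedMatching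

namespace whiskerGraph

variable {V : Type} {G : SimpleGraph V}

@[simp]
theorem adj_inl_inl {u v : V} : (whiskerGraph G).Adj (.inl u) (.inl v) ↔ G.Adj u v := by
  simp only [whiskerGraph, SimpleGraph.fromRel_adj, whiskerRel, ne_eq, Sum.inl.injEq]
  exact ⟨fun h => h.2.elim id G.adj_symm, fun h => ⟨G.ne_of_adj h, .inl h⟩⟩

@[simp]
theorem adj_inl_inr {u v : V} : (whiskerGraph G).Adj (.inl u) (.inr v) ↔ u = v := by
  simp [whiskerGraph, whiskerRel]

@[simp]
theorem adj_inr_inl {u v : V} : (whiskerGraph G).Adj (.inr u) (.inl v) ↔ v = u := by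
  simp [whiskerGraph, whiskerRel]

@[simp]
theorem not_adj_inr_inr {u v : V} : ¬ (whiskerGraph G).Adj (.inr u) (.inr v) := by
  simp [whiskerGraph, whiskerRel]

variable (G) in
def inlHom : G →g whiskerGraph G where
  toFun := Sum.inl
  map_rel' := adj_inl_inl.2

theorem inl_elim_mem_of_adj {a b : V ⊕ V} (h : (whiskerGraph G).Adj a b) :
    Sum.inl (Sum.elim id id a) = a ∨ Sum.inl (Sum.elim id id a) = b := by
  rcases a with u | u <;> rcases b with v | v <;> simp_all

theorem exists_isIndepFinset_of_isInducedMatching {M : Finset ((V ⊕ V) × (V ⊕ V))}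
    (hM : IsInducedMatching (whiskerGraph G) M) :
    ∃ s : Finset V, IsIndepFinset G s ∧ s.card = M.card := by
  let g (p : (V ⊕ V) × (V ⊕ V)) : V := Sum.elim id id p.1
  have hg (p) (hp : p ∈ M) := inl_elim_mem_of_adj (hM.1 p hp)
  exact ⟨M.image g, hM.isIndepFinset_image (g := g) (inlHom G) hg,
    Finset.card_image_of_injOn (hM.injOn_of_endpoint hg)⟩

theorem isInducedMatching_image_pendant {s : Finset V} (hs : IsIndepFinset G s) :
    IsInducedMatching (whiskerGraph G) (s.image fun v => (.inl v, .inr v)) := by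
  refine ⟨by simp, ?_⟩
  simp only [Finset.mem_image]
  rintro _ ⟨u, hu, rfl⟩ _ ⟨v, hv, rfl⟩ huv
  have hne : u ≠ v := by rintro rfl; exact huv rfl
  simp [hne, Ne.symm hne, hs u hu v hv]

theorem exists_isInducedMatching_of_isIndepFinset {s : Finset V} (hs : IsIndepFinset G s) :
    ∃ M : Finset ((V ⊕ V) × (V ⊕ V)), IsInducedMatching (whiskerGraph G) M ∧ M.card = s.card :=
  ⟨_, isInducedMatching_image_pendant hs,
    Finset.card_image_of_injective _ fun _ _ h => Sum.inl_injective (congrArg Prod.fst h)⟩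

end whiskerGraph

theorem im_whisker_eq_indepNumber_general {V : Type} (G : SimpleGraph V) :
    inducedMatchingNumber (whiskerGraph G) = indepNumber G := by
  unfold inducedMatchingNumber indepNumber
  congr 1
  ext n
  constructor
  · rintro ⟨M, hM, rfl⟩
    exact whiskerGraph.exists_isIndepFinset_of_isInducedMatching hM
  · rintro ⟨s, hs, rfl⟩
    exact whiskerGraph.exists_isInducedMatching_of_isIndepFinset hs

/-- For any graph `G`, `im(W(G)) = α(G)`. -/
theorem im_whisker_eq_indepNumber {V : Type} [Fintype V] (G : SimpleGraph V) :
    inducedMatchingNumber (whiskerGraph G) = indepNumber G :=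
  im_whisker_eq_indepNumber_general G
end
end

section
/- Let m ≥ 1 and let G be a bipartite graph of maximum degree at most 3 that contains no induced cycle C_k for 3 ≤ k ≤ 3m+3 and no induced subgraph H_j for 1 ≤ j ≤ 3m+3, where H_j is the graph consisting of a path on j vertices with one additional pendant vertex attached at each endpoint on both sides (the 'H'-shaped graph with a j-vertex horizontal path and two pendant edges at each end). Then χ(G*) ≤ ((m+1)/m)·ω(G*). -/
open scoped Classical

/-- Generating relation of the graph `H_j`: a path on `j` vertices `0, …, j-1`
with two pendant vertices attached to each of its two endpoints. -/
def hGraphRel (j : ℕ) : (Fin j ⊕ Fin 4) → (Fin j ⊕ Fin 4) → Prop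
  | Sum.inl i, Sum.inl i' => (i : ℕ) + 1 = (i' : ℕ)
  | Sum.inl i, Sum.inr t =>
      ((i : ℕ) = 0 ∧ ((t : ℕ) = 0 ∨ (t : ℕ) = 1)) ∨
      ((i : ℕ) = j - 1 ∧ ((t : ℕ) = 2 ∨ (t : ℕ) = 3))
  | _, _ => False

/-- The graph `H_j`. -/
def hGraph (j : ℕ) : SimpleGraph (Fin j ⊕ Fin 4) :=
  SimpleGraph.fromRel (hGraphRel j)

/-- `G` contains an induced copy of `H`. -/
def HasInducedCopy {V W : Type} (G : SimpleGraph V) (H : SimpleGraph W) : Prop :=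
  ∃ f : W ↪ V, ∀ a b, G.Adj (f a) (f b) ↔ H.Adj a b

/-!
Induct on the edges of `G`, carrying a proper colouring of `G*` with `k` colours and an induced
matching `s` (a clique of `G*`) with `m k ≤ (m + 1) |s|`. Each step deletes all edges at a vertex
set `Z`; the deleted edges need at most `p` new colours, and `q` of them, far from every remaining
edge, extend the matching, where `m p ≤ (m + 1) q`.

If `G` is a forest, let `Z` be the second and third vertices of a longest path: `p = q = 1`.
Otherwise a shortest cycle is induced, hence has length at least `3m + 4`. Two vertices off the
cycle adjacent to cycle vertices at distance `d ≤ 3m + 2` would span an induced `H_{d+1}`, so some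
`3m + 2` consecutive cycle vertices have no neighbours off the cycle; let `Z` consist of them.
The `3m + 3` edges at `Z` form a path, coloured with `m + 1` colours in blocks of three, and every
third of them is far from all other edges: `p = m + 1`, `q = m`.
-/

namespace LozinStar

variable {V : Type} {G H : SimpleGraph V}

/-- Adjacency in `G*`, for arbitrary pairs of vertices. -/
def Apart (G : SimpleGraph V) (e f : Sym2 V) : Prop :=
  ∀ a ∈ e, ∀ b ∈ f, a ≠ b ∧ ¬ G.Adj a b

lemma Apart.symm {e f : Sym2 V} (h : Apart G e f) : Apart G f e :=
  fun a ha b hb => ⟨(h b hb a ha).1.symm, fun hab => (h b hb a ha).2 hab.symm⟩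

instance : Std.Symm (Apart G) := ⟨fun _ _ => Apart.symm⟩

lemma Apart.ne {e f : Sym2 V} (h : Apart G e f) : e ≠ f := by
  rintro rfl
  exact (h _ e.out_fst_mem _ e.out_fst_mem).1 rfl

lemma Apart.anti (hHG : H ≤ G) {e f : Sym2 V} (h : Apart G e f) : Apart H e f :=
  fun a ha b hb => ⟨(h a ha b hb).1, fun hab => (h a ha b hb).2 (hHG hab)⟩

lemma starGraph_adj (e f : G.edgeSet) : (starGraph G).Adj e f ↔ Apart G e f := by
  rw [starGraph, SimpleGraph.fromRel_adj]
  exact ⟨fun ⟨_, h⟩ => h.elim id Apart.symm,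
    fun h => ⟨fun hef => h.ne (congrArg Subtype.val hef), Or.inl h⟩⟩

def StarColorableOn (G : SimpleGraph V) (S : Set (Sym2 V)) (k : ℕ) : Prop :=
  ∃ c : Sym2 V → ℕ, (∀ e ∈ S, c e < k) ∧ ∀ e ∈ S, ∀ f ∈ S, Apart G e f → c e ≠ c f

lemma StarColorableOn.subset {S S' : Set (Sym2 V)} {k : ℕ} (h : StarColorableOn G S k)
    (hS : S' ⊆ S) : StarColorableOn G S' k :=
  let ⟨c, hck, hc⟩ := h
  ⟨c, fun e he => hck e (hS he), fun e he f hf => hc e (hS he) f (hS hf)⟩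

lemma StarColorableOn.of_le {S : Set (Sym2 V)} {k : ℕ} (hHG : H ≤ G) (h : StarColorableOn H S k) :
    StarColorableOn G S k :=
  let ⟨c, hck, hc⟩ := h
  ⟨c, hck, fun e he f hf hef => hc e he f hf (hef.anti hHG)⟩

lemma StarColorableOn.union {S T : Set (Sym2 V)} {k p : ℕ} (hS : StarColorableOn G S k)
    (hT : StarColorableOn G T p) : StarColorableOn G (S ∪ T) (k + p) := by
  obtain ⟨c, hck, hc⟩ := hS
  obtain ⟨c', hcp, hc'⟩ := hT
  refine ⟨fun e => if e ∈ S then c e else k + c' e, fun e he => ?_, fun e he f hf hef => ?_⟩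
  · dsimp only
    split_ifs with h
    · exact (hck e h).trans_le (Nat.le_add_right k p)
    · exact Nat.add_lt_add_left (hcp e (he.resolve_left h)) k
  · dsimp only
    split_ifs with h₁ h₂ h₂
    · exact hc e h₁ f h₂ hef
    · have := hck e h₁; omega
    · have := hck f h₂; omega
    · have := hc' e (he.resolve_left h₁) f (hf.resolve_left h₂) hef; omega

lemma starColorableOn_one {S : Set (Sym2 V)} (h : ∀ e ∈ S, ∀ f ∈ S, ¬ Apart G e f) :
    StarColorableOn G S 1 :=
  ⟨fun _ => 0, fun _ _ => Nat.one_pos, fun e he f hf hef => (h e he f hf hef).elim⟩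

lemma starColorableOn_image {ι : Type} [Nonempty ι] (E : ι → Sym2 V) (K : Set ι) (κ : ι → ℕ) {p : ℕ}
    (hκ : ∀ i ∈ K, κ i < p) (hE : ∀ i ∈ K, ∀ j ∈ K, Apart G (E i) (E j) → κ i ≠ κ j) :
    StarColorableOn G (E '' K) p := by
  refine ⟨κ ∘ Function.invFunOn E K, ?_, ?_⟩
  · rintro _ ⟨i, hi, rfl⟩
    exact hκ _ (Function.invFunOn_pos ⟨i, hi, rfl⟩).1
  · rintro _ ⟨i, hi, rfl⟩ _ ⟨j, hj, rfl⟩ hij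
    obtain ⟨hi', hEi⟩ := Function.invFunOn_pos (b := E i) ⟨i, hi, rfl⟩
    obtain ⟨hj', hEj⟩ := Function.invFunOn_pos (b := E j) ⟨j, hj, rfl⟩
    exact hE _ hi' _ hj' (by rwa [hEi, hEj])

lemma not_apart_of_le_add_two {w : ℤ → V} (hadj : ∀ t, G.Adj (w t) (w (t + 1))) {i j : ℤ}
    (hij : i ≤ j) (hji : j ≤ i + 2) : ¬ Apart G s(w i, w (i + 1)) s(w j, w (j + 1)) := by
  intro h
  rcases (by omega : j = i ∨ j = i + 1 ∨ j = i + 2) with rfl | rfl | rfl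
  · exact (h _ (Sym2.mem_mk_left _ _) _ (Sym2.mem_mk_left _ _)).1 rfl
  · exact (h _ (Sym2.mem_mk_right _ _) _ (Sym2.mem_mk_left _ _)).1 rfl
  · exact (h _ (Sym2.mem_mk_right _ _) _ (Sym2.mem_mk_left _ _)).2
      (by simpa [add_assoc] using hadj (i + 1))

/-- Three consecutive edges of a walk pairwise meet, so blocks of three share a colour. -/
lemma starColorableOn_walk {w : ℤ → V} (hadj : ∀ t, G.Adj (w t) (w (t + 1))) (m : ℕ) :
    StarColorableOn G ((fun k => s(w k, w (k + 1))) '' Set.Icc 0 (3 * m + 2)) (m + 1) := by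
  refine starColorableOn_image _ _ (fun k => (k / 3).toNat) (fun k hk => ?_)
    fun i hi j hj hij hκ => ?_
  · simp only [Set.mem_Icc] at hk; omega
  · simp only [Set.mem_Icc] at hi hj
    rcases le_total i j with h | h
    · exact not_apart_of_le_add_two hadj h (by omega) hij
    · exact not_apart_of_le_add_two hadj h (by omega) hij.symm

lemma chromNum_starGraph_le {k : ℕ} (h : StarColorableOn G G.edgeSet k) :
    chromNum (starGraph G) ≤ k := by
  obtain ⟨c, hck, hc⟩ := h
  exact Nat.sInf_le ⟨fun e => ⟨c e, hck e e.2⟩, fun e f hef hcf =>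
    hc e e.2 f f.2 ((starGraph_adj e f).1 hef) (congrArg Fin.val hcf)⟩

lemma card_le_cliqueNum_starGraph [Fintype V] {s : Finset (Sym2 V)} (hsG : ↑s ⊆ G.edgeSet)
    (hs : (s : Set (Sym2 V)).Pairwise (Apart G)) : s.card ≤ cliqueNum (starGraph G) := by
  refine le_csSup ⟨Fintype.card G.edgeSet, ?_⟩ ⟨s.subtype (· ∈ G.edgeSet), ?_, ?_⟩
  · rintro n ⟨t, ht⟩
    exact ht.card_eq ▸ t.card_le_univ
  · intro e he f hf hef
    rw [starGraph_adj]
    exact hs (Finset.mem_subtype.1 he) (Finset.mem_subtype.1 hf) (Subtype.coe_ne_coe.2 hef)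
  · rw [Finset.card_subtype, Finset.filter_true_of_mem fun e he => hsG he]

def touching (Z : Set V) : Set (Sym2 V) := {e | ∃ v ∈ e, v ∈ Z}

@[simp] lemma mk_mem_touching {Z : Set V} {a b : V} : s(a, b) ∈ touching Z ↔ a ∈ Z ∨ b ∈ Z := by
  simp [touching]

lemma deleteEdges_touching_adj {Z : Set V} {a b : V} :
    (G.deleteEdges (touching Z)).Adj a b ↔ G.Adj a b ∧ a ∉ Z ∧ b ∉ Z := by
  simp [not_or]

lemma Apart.of_deleteEdges_touching {Z : Set V} {e f : Sym2 V}
    (h : Apart (G.deleteEdges (touching Z)) e f) (he : e ∉ touching Z) (hf : f ∉ touching Z) :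
    Apart G e f :=
  fun a ha b hb => ⟨(h a ha b hb).1, fun hab => (h a ha b hb).2
    (deleteEdges_touching_adj.2 ⟨hab, fun hZ => he ⟨a, ha, hZ⟩, fun hZ => hf ⟨b, hb, hZ⟩⟩)⟩

lemma deleteEdges_touching_adj_iff_of_forall_exists {W : Type} {Z : Set V} {φ : W → V}
    (hφ : ∀ a, ∃ b, (G.deleteEdges (touching Z)).Adj (φ a) (φ b)) (a b : W) :
    (G.deleteEdges (touching Z)).Adj (φ a) (φ b) ↔ G.Adj (φ a) (φ b) := by
  obtain ⟨_, ha⟩ := hφ a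
  obtain ⟨_, hb⟩ := hφ b
  rw [deleteEdges_touching_adj] at ha hb ⊢
  exact ⟨And.left, fun h => ⟨h, ha.2.1, hb.2.1⟩⟩

lemma hasInducedCopy_of_deleteEdges_touching {W : Type} {K : SimpleGraph W}
    (hK : ∀ a, ∃ b, K.Adj a b) {Z : Set V} (h : HasInducedCopy (G.deleteEdges (touching Z)) K) :
    HasInducedCopy G K := by
  obtain ⟨φ, hφ⟩ := h
  have hφ' := deleteEdges_touching_adj_iff_of_forall_exists
    (fun a => (hK a).imp fun b hab => (hφ a b).2 hab)
  exact ⟨φ, fun a b => (hφ' a b).symm.trans (hφ a b)⟩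

lemma hasInducedCycle_of_deleteEdges_touching {n : ℕ} {Z : Set V}
    (h : HasInducedCycle (G.deleteEdges (touching Z)) n) : HasInducedCycle G n := by
  obtain ⟨φ, hφ⟩ := h
  have hφ' := deleteEdges_touching_adj_iff_of_forall_exists (φ := φ)
    (fun i => ⟨⟨(i + 1) % n, Nat.mod_lt _ i.pos⟩, (hφ _ _).2 (Or.inl rfl)⟩)
  exact ⟨φ, fun i j => (hφ' i j).symm.trans (hφ i j)⟩

lemma hGraph_adj_inl_inl {j : ℕ} {i i' : Fin j} :
    (hGraph j).Adj (.inl i) (.inl i') ↔ (i : ℕ) + 1 = i' ∨ (i' : ℕ) + 1 = i := by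
  simp only [hGraph, SimpleGraph.fromRel_adj, hGraphRel, ne_eq, Sum.inl.injEq]
  exact ⟨fun h => h.2, fun h => ⟨fun hii => by subst hii; omega, h⟩⟩

lemma hGraph_adj_inl_inr {j : ℕ} {i : Fin j} {t : Fin 4} :
    (hGraph j).Adj (.inl i) (.inr t) ↔
      ((i : ℕ) = 0 ∧ ((t : ℕ) = 0 ∨ (t : ℕ) = 1)) ∨
        ((i : ℕ) = j - 1 ∧ ((t : ℕ) = 2 ∨ (t : ℕ) = 3)) := by
  simp [hGraph, hGraphRel]

lemma hGraph_not_adj_inr_inr {j : ℕ} {t t' : Fin 4} : ¬ (hGraph j).Adj (.inr t) (.inr t') := by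
  simp [hGraph, hGraphRel]

lemma hGraph_exists_adj {j : ℕ} (hj : 1 ≤ j) (a : Fin j ⊕ Fin 4) : ∃ b, (hGraph j).Adj a b := by
  rcases a with i | t
  · by_cases hi : (i : ℕ) = 0
    · exact ⟨.inr 0, hGraph_adj_inl_inr.2 (Or.inl ⟨hi, Or.inl rfl⟩)⟩
    · exact ⟨.inl ⟨i - 1, by omega⟩, hGraph_adj_inl_inl.2 (Or.inr (by simp; omega))⟩
  · by_cases ht : (t : ℕ) ≤ 1
    · exact ⟨.inl ⟨0, hj⟩, (hGraph_adj_inl_inr.2 (Or.inl ⟨rfl, by omega⟩)).symm⟩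
    · exact ⟨.inl ⟨j - 1, by omega⟩, (hGraph_adj_inl_inr.2 (Or.inr ⟨rfl, by omega⟩)).symm⟩

def InLozinClass (m : ℕ) (G : SimpleGraph V) : Prop :=
  (∀ n, 3 ≤ n → n ≤ 3 * m + 3 → ¬ HasInducedCycle G n) ∧
    ∀ j, 1 ≤ j → j ≤ 3 * m + 3 → ¬ HasInducedCopy G (hGraph j)

lemma InLozinClass.deleteEdges_touching {m : ℕ} (hG : InLozinClass m G) (Z : Set V) :
    InLozinClass m (G.deleteEdges (touching Z)) :=
  ⟨fun n h₁ h₂ h => hG.1 n h₁ h₂ (hasInducedCycle_of_deleteEdges_touching h),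
    fun j h₁ h₂ h => hG.2 j h₁ h₂ (hasInducedCopy_of_deleteEdges_touching (hGraph_exists_adj h₁) h)⟩

def StarRatioBound (m : ℕ) (G : SimpleGraph V) : Prop :=
  ∃ (k : ℕ) (s : Finset (Sym2 V)), StarColorableOn G G.edgeSet k ∧ ↑s ⊆ G.edgeSet ∧
    (s : Set (Sym2 V)).Pairwise (Apart G) ∧ m * k ≤ (m + 1) * s.card

/-- Deleting the edges at `Z` costs at most `p` colours of `G*`, while `T` extends every
induced matching of what is left. -/
def IsReducer (m : ℕ) (G : SimpleGraph V) (Z : Set V) : Prop :=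
  (G.edgeSet ∩ touching Z).Nonempty ∧ ∃ (p : ℕ) (T : Finset (Sym2 V)),
    StarColorableOn G (G.edgeSet ∩ touching Z) p ∧ ↑T ⊆ G.edgeSet ∩ touching Z ∧
    (T : Set (Sym2 V)).Pairwise (Apart G) ∧
    (∀ e ∈ T, ∀ f ∈ G.edgeSet \ touching Z, Apart G e f) ∧ m * p ≤ (m + 1) * T.card

lemma IsReducer.starRatioBound {m : ℕ} {Z : Set V} (hZ : IsReducer m G Z)
    (h : StarRatioBound m (G.deleteEdges (touching Z))) : StarRatioBound m G := by
  obtain ⟨-, p, T, hp, hTZ, hT, hTfar, hpT⟩ := hZ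
  obtain ⟨k, s, hk, hsG, hs, hks⟩ := h
  rw [SimpleGraph.edgeSet_deleteEdges] at hk hsG
  have hsT : Disjoint s T :=
    Finset.disjoint_left.2 fun e hes heT => (hsG hes).2 (hTZ heT).2
  refine ⟨k + p, s ∪ T, ?_, ?_, ?_, ?_⟩
  · rw [← Set.sdiff_union_inter G.edgeSet (touching Z)]
    exact (hk.of_le (G.deleteEdges_le _)).union hp
  · rw [Finset.coe_union]
    exact Set.union_subset (hsG.trans Set.sdiff_subset) (hTZ.trans Set.inter_subset_left)
  · rw [Finset.coe_union, Set.pairwise_union_of_symm]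
    refine ⟨fun e he f hf hef => (hs he hf hef).of_deleteEdges_touching (hsG he).2 (hsG hf).2,
      hT, fun e he f hf _ => (hTfar f hf e (hsG he)).symm⟩
  · rw [Finset.card_union_of_disjoint hsT]
    linarith

lemma deleteEdges_touching_lt {m : ℕ} {Z : Set V} (hZ : IsReducer m G Z) :
    G.deleteEdges (touching Z) < G := by
  refine (G.deleteEdges_le _).lt_of_ne fun h => ?_
  obtain ⟨e, heG, heZ⟩ := hZ.1
  rw [SimpleGraph.deleteEdges_eq_self] at h
  exact Set.disjoint_left.1 h heG heZ

def IsPathFn (G : SimpleGraph V) (n : ℕ) (p : ℕ → V) : Prop :=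
  (∀ t < n, G.Adj (p t) (p (t + 1))) ∧ ∀ i ≤ n, ∀ j ≤ n, p i = p j → i = j

/-- A cycle of length `n`, run through periodically: indexing by `ℤ` makes rotations and
reflections mere reparametrisations. -/
structure IsCycleFn (G : SimpleGraph V) (n : ℕ) (w : ℤ → V) : Prop where
  three_le : 3 ≤ n
  periodic : Function.Periodic w n
  adj : ∀ t, G.Adj (w t) (w (t + 1))
  injOn : Set.InjOn w (Set.Ico 0 n)

def HasCycle (G : SimpleGraph V) (n : ℕ) : Prop := ∃ w, IsCycleFn G n w

structure IsShortestCycle (G : SimpleGraph V) (n : ℕ) (w : ℤ → V) : Prop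
    extends IsCycleFn G n w where
  le_of_hasCycle : ∀ k, HasCycle G k → n ≤ k

lemma add_one_emod {N : ℤ} (hN : 0 < N) (t : ℤ) :
    (t + 1) % N = if t % N + 1 = N then 0 else t % N + 1 := by
  have hdiv := Int.emod_add_mul_ediv t N
  have h₀ := Int.emod_nonneg t hN.ne'
  have h₁ := Int.emod_lt_of_pos t hN
  split_ifs with h
  · rw [show t + 1 = N * (t / N + 1) by linear_combination h - hdiv, Int.mul_emod_right]
  · rw [show t + 1 = (t % N + 1) + N * (t / N) by linear_combination -hdiv,
      Int.add_mul_emod_self_left, Int.emod_eq_of_lt (by omega) (by omega)]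

lemma IsPathFn.hasCycle {n : ℕ} {p : ℕ → V} (hp : IsPathFn G n p) (hn : 2 ≤ n)
    (h : G.Adj (p n) (p 0)) : HasCycle G (n + 1) := by
  have hN : (0 : ℤ) < (n + 1 : ℕ) := by omega
  refine ⟨fun t => p (t % (n + 1 : ℕ)).toNat, by omega, fun t => by simp, fun t => ?_, ?_⟩
  · have h₀ := Int.emod_nonneg t hN.ne'
    have h₁ := Int.emod_lt_of_pos t hN
    rw [add_one_emod hN]
    split_ifs with hlast
    · convert h using 2 <;> omega
    · convert hp.1 (t % (n + 1 : ℕ)).toNat (by omega) using 2; omega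
  · intro i hi j hj hij
    simp only [Set.mem_Ico] at hi hj
    simp only [Int.emod_eq_of_lt hi.1 hi.2, Int.emod_eq_of_lt hj.1 hj.2] at hij
    have := hp.2 _ (by omega) _ (by omega) hij
    omega

lemma IsPathFn.mono {n k : ℕ} {p : ℕ → V} (hp : IsPathFn G n p) (hk : k ≤ n) : IsPathFn G k p :=
  ⟨fun t ht => hp.1 t (by omega), fun i hi j hj => hp.2 i (by omega) j (by omega)⟩

lemma IsPathFn.tail {n : ℕ} {p : ℕ → V} (hp : IsPathFn G (n + 1) p) :
    IsPathFn G n (fun t => p (t + 1)) :=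
  ⟨fun t ht => hp.1 (t + 1) (by omega),
    fun i hi j hj h => by have := hp.2 _ (by omega) _ (by omega) h; omega⟩

lemma IsPathFn.cons {n : ℕ} {p : ℕ → V} (hp : IsPathFn G n p) {z : V} (hz : ∀ i ≤ n, z ≠ p i)
    (h : G.Adj z (p 0)) : IsPathFn G (n + 1) (fun t => if t = 0 then z else p (t - 1)) := by
  refine ⟨fun t ht => ?_, fun i hi j hj hij => ?_⟩
  · rcases t with _ | t
    · simpa using h
    · simpa using hp.1 t (by omega)
  · rcases i with _ | i <;> rcases j with _ | j <;> simp only [↓reduceIte, Nat.add_one_sub_one,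
      Nat.add_eq_zero_iff, one_ne_zero, and_false] at hij
    · rfl
    · exact (hz j (by omega) hij).elim
    · exact (hz i (by omega) hij.symm).elim
    · have := hp.2 i (by omega) j (by omega) hij; omega

lemma IsPathFn.lt_card [Fintype V] {n : ℕ} {p : ℕ → V} (hp : IsPathFn G n p) :
    n < Fintype.card V := by
  have := Fintype.card_le_of_injective (fun i : Fin (n + 1) => p i)
    fun i j h => Fin.ext (hp.2 i (by omega) j (by omega) h)
  simpa using this

lemma exists_longest_path [Fintype V] (hE : G.edgeSet.Nonempty) :
    ∃ n p, 1 ≤ n ∧ IsPathFn G n p ∧ ∀ q, ¬ IsPathFn G (n + 1) q := by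
  have hex : ∃ n, ¬ ∃ q, IsPathFn G (n + 1) q :=
    ⟨Fintype.card V, fun ⟨q, hq⟩ => by have := hq.lt_card; omega⟩
  obtain ⟨e, he⟩ := hE
  induction e using Sym2.ind with | _ a b => ?_
  have hN := Nat.find_spec hex
  have hN0 : Nat.find hex ≠ 0 := by
    intro h0
    refine (h0 ▸ hN) ⟨fun t => if t = 0 then a else b, fun t ht => ?_, fun i hi j hj h => ?_⟩
    · obtain rfl : t = 0 := by omega
      simpa using he
    · have hab := G.ne_of_adj he
      interval_cases i <;> interval_cases j <;> simp_all
  obtain ⟨p, hp⟩ := not_not.1 (Nat.find_min hex (Nat.sub_one_lt hN0))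
  refine ⟨Nat.find hex, p, Nat.one_le_iff_ne_zero.2 hN0, ?_, fun q hq => hN ⟨q, hq⟩⟩
  rwa [Nat.sub_add_cancel (Nat.one_le_iff_ne_zero.2 hN0)] at hp

def IsLeafFan (G : SimpleGraph V) (x₀ x₁ x₂ : V) : Prop :=
  G.Adj x₀ x₁ ∧ G.Adj x₁ x₂ ∧ (∀ z, G.Adj x₀ z → z = x₁) ∧
    ∀ u, G.Adj x₁ u → u ≠ x₂ → ∀ z, G.Adj u z → z = x₁

lemma IsPathFn.eq_one_of_adj_zero {n : ℕ} {p : ℕ → V} (hp : IsPathFn G n p)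
    (hmax : ∀ q, ¬ IsPathFn G (n + 1) q) (hcyc : ∀ k, ¬ HasCycle G k) {z : V}
    (hz : G.Adj (p 0) z) : z = p 1 := by
  by_contra h1
  obtain ⟨i, hi, rfl⟩ : ∃ i ≤ n, z = p i := by
    by_contra! hz'
    exact hmax _ (hp.cons hz' hz.symm)
  have hi0 : i ≠ 0 := by rintro rfl; exact G.irrefl hz
  have hi1 : i ≠ 1 := by rintro rfl; exact h1 rfl
  exact hcyc _ ((hp.mono hi).hasCycle (by omega) hz.symm)

/-- Take `x₀, x₁` to be the first two vertices of a longest path. -/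
lemma exists_isLeafFan [Fintype V] (hE : G.edgeSet.Nonempty) (hcyc : ∀ n, ¬ HasCycle G n) :
    ∃ x₀ x₁ x₂, IsLeafFan G x₀ x₁ x₂ := by
  obtain ⟨n, p, hn, hp, hmax⟩ := exists_longest_path hE
  have hp' : IsPathFn G (n - 1) (fun t => p (t + 1)) := (Nat.sub_add_cancel hn ▸ hp).tail
  have leaf : ∀ z, G.Adj (p 0) z → z = p 1 := fun z hz => hp.eq_one_of_adj_zero hmax hcyc hz
  refine ⟨p 0, p 1, if 2 ≤ n then p 2 else p 0, hp.1 0 hn, ?_, leaf, fun u hu hu₂ z hz => ?_⟩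
  · split_ifs with h2
    · exact hp.1 1 h2
    · exact (hp.1 0 hn).symm
  by_cases hu_on : ∃ i ≤ n, u = p i
  · obtain ⟨i, hi, rfl⟩ := hu_on
    rcases (by omega : i = 0 ∨ i = 1 ∨ i = 2 ∨ 3 ≤ i) with rfl | rfl | rfl | h3
    · exact leaf z hz
    · exact (G.irrefl hu).elim
    · simp [hi] at hu₂
    · -- the cycle `p 1, …, p i`
      exact (hcyc _ ((hp'.mono (k := i - 1) (by omega)).hasCycle (by omega)
        (by simpa [Nat.sub_add_cancel (by omega : 1 ≤ i)] using hu.symm))).elim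
  push Not at hu_on
  by_contra hz1
  by_cases hz_on : ∃ i ≤ n, z = p i
  · obtain ⟨i, hi, rfl⟩ := hz_on
    rcases (by omega : i = 0 ∨ i = 1 ∨ 2 ≤ i) with rfl | rfl | h2
    · exact hu_on 1 hn (leaf u hz.symm)
    · exact hz1 rfl
    · -- the cycle `u, p 1, …, p i`
      have hc := (hp'.mono (k := i - 1) (by omega)).cons (fun t _ => hu_on (t + 1) (by omega))
        hu.symm
      refine hcyc _ (hc.hasCycle (by omega) ?_)
      have hi0 : i ≠ 0 := by omega
      simpa [Nat.sub_add_cancel (by omega : 1 ≤ i), hi0] using hz.symm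
  · -- the path `z, u, p 1, …, p n` is too long
    push Not at hz_on
    have hc := (hp'.cons (fun t _ => hu_on (t + 1) (by omega)) hu.symm).cons
      (z := z) (fun t ht => ?_) (by simpa using hz.symm)
    · exact hmax _ (Nat.sub_add_cancel hn ▸ hc)
    · rcases t with _ | t
      · exact (G.ne_of_adj hz).symm
      · simpa using hz_on (t + 1) (by omega)

lemma IsLeafFan.isReducer {x₀ x₁ x₂ : V} (h : IsLeafFan G x₀ x₁ x₂) (m : ℕ) :
    IsReducer m G {x₁, x₂} := by
  obtain ⟨h01, h12, hx₀, hleaf⟩ := h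
  have he₀ : s(x₀, x₁) ∈ G.edgeSet ∩ touching {x₁, x₂} := ⟨h01, by simp⟩
  refine ⟨⟨_, he₀⟩, 1, {s(x₀, x₁)}, starColorableOn_one ?_, by simpa using he₀,
    by simp, ?_, by simp⟩
  · -- every edge at `x₁` or `x₂` meets every other one, as `x₁ ~ x₂`
    have key : ∀ e ∈ G.edgeSet ∩ touching {x₁, x₂}, x₁ ∈ e ∨ x₂ ∈ e := by
      rintro e ⟨-, v, hv, rfl | rfl⟩ <;> simp [hv]
    intro e he f hf hef
    rcases key e he with h | h <;> rcases key f hf with h' | h'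
    · exact (hef _ h _ h').1 rfl
    · exact (hef _ h _ h').2 h12
    · exact (hef _ h _ h').2 h12.symm
    · exact (hef _ h _ h').1 rfl
  · simp only [Finset.mem_singleton, forall_eq]
    rintro f ⟨hf, hfZ⟩
    induction f using Sym2.ind with | _ b c => ?_
    simp only [mk_mem_touching, Set.mem_insert_iff, Set.mem_singleton_iff, not_or] at hfZ
    have key : ∀ b c, G.Adj b c → b ≠ x₁ → b ≠ x₂ → c ≠ x₁ →
        ∀ a ∈ s(x₀, x₁), a ≠ b ∧ ¬ G.Adj a b := by
      intro b c hbc hb1 hb2 hc1 a ha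
      rcases Sym2.mem_iff.1 ha with rfl | rfl
      · exact ⟨fun h => hc1 (hx₀ c (h ▸ hbc)), fun h => hb1 (hx₀ b h)⟩
      · exact ⟨fun h => hb1 h.symm, fun h => hc1 (hleaf b h hb2 c hbc)⟩
    intro a ha d hd
    rcases Sym2.mem_iff.1 hd with rfl | rfl
    · exact key _ c hf hfZ.1.1 hfZ.1.2 hfZ.2.1 a ha
    · exact key _ b hf.symm hfZ.2.1 hfZ.2.2 hfZ.1.1 a ha

/-- The copy of `H_{d+1}` spanned by the arc `w (a - 1), …, w (a + d + 1)` of a cycle and by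
`x` and `y`, pendant at `w a` and `w (a + d)`. -/
def hGraphMap (w : ℤ → V) (x y : V) (a : ℤ) (d : ℕ) : Fin (d + 1) ⊕ Fin 4 → V :=
  Sum.elim (fun i => w (a + (i : ℕ))) ![x, w (a - 1), y, w (a + d + 1)]

namespace IsCycleFn

variable {n : ℕ} {w : ℤ → V}

lemma eq_of_apply_eq (hw : IsCycleFn G n w) {a i j : ℤ} (hi : a ≤ i ∧ i < a + n)
    (hj : a ≤ j ∧ j < a + n) (h : w i = w j) : i = j := by
  have hn : (0 : ℤ) < n := by have := hw.three_le; omega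
  have hmod : ∀ i, w i = w (i % n) := fun i => by
    have := hw.periodic.sub_int_mul_eq (i / n) (x := i)
    rwa [Int.cast_id, mul_comm, ← Int.emod_def, eq_comm] at this
  rw [hmod i, hmod j] at h
  have := hw.injOn ⟨Int.emod_nonneg i hn.ne', Int.emod_lt_of_pos i hn⟩
    ⟨Int.emod_nonneg j hn.ne', Int.emod_lt_of_pos j hn⟩ h
  have hdvd : (n : ℤ) ∣ j - i := Int.ModEq.dvd this
  rcases le_total i j with h | h
  · have := Int.eq_zero_of_dvd_of_nonneg_of_lt (by omega) (by omega) hdvd; omega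
  · have := Int.eq_zero_of_dvd_of_nonneg_of_lt (by omega) (by omega) (dvd_neg.2 hdvd); omega

lemma reflect (hw : IsCycleFn G n w) : IsCycleFn G n (fun t => w (-t)) where
  three_le := hw.three_le
  periodic t := by
    show w (-(t + n)) = w (-t)
    rw [neg_add', hw.periodic.sub_eq]
  adj t := by
    have := (hw.adj (-t - 1)).symm
    rwa [sub_add_cancel, ← neg_add'] at this
  injOn i hi j hj hij := by
    have := hw.eq_of_apply_eq (a := 1 - n) (by simp at hi; omega) (by simp at hj; omega) hij
    omega

lemma comp_add (hw : IsCycleFn G n w) (s : ℤ) : IsCycleFn G n (fun t => w (s + t)) where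
  three_le := hw.three_le
  periodic t := by simpa [add_assoc] using hw.periodic (s + t)
  adj t := by simpa [add_assoc] using hw.adj (s + t)
  injOn i hi j hj hij := by
    have := hw.eq_of_apply_eq (a := s) (by simp at hi; omega) (by simp at hj; omega) hij
    omega

lemma hGraphMap_injective (hw : IsCycleFn G n w) {x y : V} (hx : x ∉ Set.range w)
    (hy : y ∉ Set.range w) (hxy : x ≠ y) {a : ℤ} {d : ℕ} (hdn : d + 3 ≤ n) :
    Function.Injective (hGraphMap w x y a d) := by
  have hweq : ∀ i j : ℤ, a - 1 ≤ i → i ≤ a + d + 1 → a - 1 ≤ j → j ≤ a + d + 1 →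
      (w i = w j ↔ i = j) := fun i j hi hi' hj hj' =>
    ⟨hw.eq_of_apply_eq (a := a - 1) (by omega) (by omega), congrArg w⟩
  have hxw : ∀ i, w i ≠ x := fun i h => hx ⟨i, h⟩
  have hyw : ∀ i, w i ≠ y := fun i h => hy ⟨i, h⟩
  rintro (i | t) (j | t') h
  · have := i.2; have := j.2
    simp (disch := omega) only [hGraphMap, Sum.elim_inl, hweq] at h
    exact congrArg _ (Fin.ext (by omega))
  · have := i.2
    fin_cases t' <;> simp (disch := omega) [hGraphMap, hweq, hxw, hyw] at h <;> omega
  · have := j.2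
    fin_cases t <;> simp (disch := omega) [hGraphMap, hweq, hxw, hyw, eq_comm (a := x),
      eq_comm (a := y)] at h <;> omega
  · fin_cases t <;> fin_cases t' <;> simp (disch := omega) [hGraphMap, hweq, hxw, hyw, hxy,
      hxy.symm, eq_comm (a := x), eq_comm (a := y)] at h ⊢ <;> omega

end IsCycleFn

lemma exists_isShortestCycle (h : ∃ n, HasCycle G n) : ∃ n w, IsShortestCycle G n w :=
  let ⟨w, hw⟩ := Nat.find_spec h
  ⟨_, w, hw, fun _ hk => Nat.find_min' h hk⟩

lemma IsShortestCycle.reflect {n : ℕ} {w : ℤ → V} (hw : IsShortestCycle G n w) :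
    IsShortestCycle G n (fun t => w (-t)) :=
  ⟨hw.toIsCycleFn.reflect, hw.le_of_hasCycle⟩

lemma IsShortestCycle.comp_add {n : ℕ} {w : ℤ → V} (hw : IsShortestCycle G n w) (s : ℤ) :
    IsShortestCycle G n (fun t => w (s + t)) :=
  ⟨hw.toIsCycleFn.comp_add s, hw.le_of_hasCycle⟩

structure IsDetour (G : SimpleGraph V) (w : ℤ → V) (a : ℤ) (d ℓ : ℕ) (q : ℕ → V) : Prop where
  start : q 0 = w a
  finish : q ℓ = w (a + d)
  adj : ∀ t < ℓ, G.Adj (q t) (q (t + 1))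
  not_mem_range : ∀ t, 0 < t → t < ℓ → q t ∉ Set.range w
  injOn : ∀ i j, 0 < i → i < ℓ → 0 < j → j < ℓ → q i = q j → i = j

def detourLoop (w : ℤ → V) (q : ℕ → V) (a : ℤ) (d ℓ : ℕ) (t : ℕ) : V :=
  if t < ℓ then q t else w (a + d - (t - ℓ : ℕ))

namespace IsDetour

variable {n : ℕ} {w : ℤ → V} {a : ℤ} {d ℓ : ℕ} {q : ℕ → V}

lemma reflect (hq : IsDetour G w a d ℓ q) (hw : IsCycleFn G n w) (hd : d ≤ n) :
    IsDetour G (fun t => w (-t)) (-a) (n - d) ℓ q where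
  start := by simpa using hq.start
  finish := by
    rw [hq.finish, ← hw.periodic.sub_eq]
    congr 1
    push_cast [hd]
    ring
  adj := hq.adj
  not_mem_range t h₀ h₁ := fun ⟨s, hs⟩ => hq.not_mem_range t h₀ h₁ ⟨-s, hs⟩
  injOn := hq.injOn

lemma isPathFn_detourLoop (hq : IsDetour G w a d ℓ q) (hw : IsCycleFn G n w) (hd : d < n) :
    IsPathFn G (d + ℓ - 1) (detourLoop w q a d ℓ) := by
  have hlt : ∀ t < ℓ, detourLoop w q a d ℓ t = q t := fun t ht => if_pos ht
  have hge : ∀ t, ℓ ≤ t → detourLoop w q a d ℓ t = w (a + d - (t - ℓ : ℕ)) :=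
    fun t ht => if_neg (not_lt.2 ht)
  refine ⟨fun t ht => ?_, fun i hi j hj hij => ?_⟩
  · rcases lt_trichotomy (t + 1) ℓ with h | h | h
    · rw [hlt t (by omega), hlt (t + 1) h]
      exact hq.adj t (by omega)
    · rw [hlt t (by omega), hge (t + 1) h.ge, h, Nat.sub_self, Nat.cast_zero, sub_zero,
        ← hq.finish, ← h]
      exact hq.adj t (by omega)
    · rw [hge t (by omega), hge (t + 1) h.le]
      convert (hw.adj (a + d - ((t + 1 - ℓ : ℕ) : ℤ))).symm using 2
      push_cast [(by omega : ℓ ≤ t), (by omega : ℓ ≤ t + 1)]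
      ring
  rcases lt_or_ge i ℓ with hiℓ | hiℓ <;> rcases lt_or_ge j ℓ with hjℓ | hjℓ
  · rw [hlt i hiℓ, hlt j hjℓ] at hij
    rcases Nat.eq_zero_or_pos i with rfl | hi0 <;> rcases Nat.eq_zero_or_pos j with rfl | hj0
    · rfl
    · exact (hq.not_mem_range j hj0 hjℓ ⟨a, hq.start ▸ hij⟩).elim
    · exact (hq.not_mem_range i hi0 hiℓ ⟨a, hq.start ▸ hij.symm⟩).elim
    · exact hq.injOn i j hi0 hiℓ hj0 hjℓ hij
  · rw [hlt i hiℓ, hge j hjℓ] at hij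
    rcases Nat.eq_zero_or_pos i with rfl | hi0
    · have := hw.eq_of_apply_eq (a := a) (by omega) (by omega) (hq.start ▸ hij); omega
    · exact (hq.not_mem_range i hi0 hiℓ ⟨_, hij.symm⟩).elim
  · rw [hge i hiℓ, hlt j hjℓ] at hij
    rcases Nat.eq_zero_or_pos j with rfl | hj0
    · have := hw.eq_of_apply_eq (a := a) (by omega) (by omega) (hq.start ▸ hij.symm); omega
    · exact (hq.not_mem_range j hj0 hjℓ ⟨_, hij⟩).elim
  · rw [hge i hiℓ, hge j hjℓ] at hij
    have := hw.eq_of_apply_eq (a := a) (by omega) (by omega) hij; omega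

lemma detourLoop_adj (hq : IsDetour G w a d ℓ q) (hw : IsCycleFn G n w) (hℓ : 0 < ℓ) :
    G.Adj (detourLoop w q a d ℓ (d + ℓ - 1)) (detourLoop w q a d ℓ 0) := by
  rw [detourLoop, detourLoop, if_pos hℓ, hq.start]
  rcases Nat.eq_zero_or_pos d with rfl | hd₀
  · rw [zero_add, if_pos (by omega)]
    have := hq.adj (ℓ - 1) (by omega)
    rwa [Nat.sub_add_cancel hℓ, hq.finish, Nat.cast_zero, add_zero] at this
  · rw [if_neg (by omega)]
    convert (hw.adj a).symm using 2
    push_cast [(by omega : ℓ ≤ d + ℓ - 1)]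
    omega

/-- A detour of length `ℓ` closes up, with the arc of `w` from `a + d` back to `a`, to a cycle of
length `d + ℓ`. -/
lemma le_of_isShortestCycle (hq : IsDetour G w a d ℓ q) (hw : IsShortestCycle G n w) (hd : d < n)
    (hℓ : 0 < ℓ) (h3 : 3 ≤ d + ℓ) : n ≤ d + ℓ := by
  have := hw.le_of_hasCycle _ ((hq.isPathFn_detourLoop hw.toIsCycleFn hd).hasCycle (by omega)
    (hq.detourLoop_adj hw.toIsCycleFn hℓ))
  omega

lemma le_of_isShortestCycle' (hq : IsDetour G w a d ℓ q) (hw : IsShortestCycle G n w)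
    (hd₀ : 0 < d) (hd : d < n) (hℓ : 0 < ℓ) (h3 : 3 ≤ n - d + ℓ) : n ≤ n - d + ℓ :=
  (hq.reflect hw.toIsCycleFn hd.le).le_of_isShortestCycle hw.reflect (by omega) hℓ h3

end IsDetour

namespace IsShortestCycle

variable {n : ℕ} {w : ℤ → V}

lemma adj_iff (hw : IsShortestCycle G n w) {i j : ℤ}
    (hij : i ≤ j) (hji : j < i + n) : G.Adj (w i) (w j) ↔ j = i + 1 ∨ j + 1 = i + n := by
  obtain ⟨d, rfl⟩ : ∃ d : ℕ, j = i + d := ⟨(j - i).toNat, by omega⟩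
  constructor
  · intro h
    have hd₀ : d ≠ 0 := by rintro rfl; simp at h
    by_contra hd
    have hq : IsDetour G w i d 1 fun t => if t = 0 then w i else w (i + d) := by
      refine ⟨rfl, rfl, fun t ht => ?_, by omega, by omega⟩
      obtain rfl : t = 0 := by omega
      simpa using h
    have h₁ := hq.le_of_isShortestCycle hw (by omega) one_pos (by omega)
    have h₂ := hq.le_of_isShortestCycle' hw (by omega) (by omega) one_pos (by omega)
    omega
  · rintro (h | h)
    · simpa [h] using hw.adj i
    · rw [show i + d = i - 1 + n by omega, hw.periodic]
      simpa using (hw.adj (i - 1)).symm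

lemma eq_or_eq_of_adj (hw : IsShortestCycle G n w) {i j : ℤ}
    (h : G.Adj (w i) (w j)) : w j = w (i - 1) ∨ w j = w (i + 1) := by
  obtain ⟨j', hj', hj⟩ := hw.periodic.exists_mem_Ico (by have := hw.three_le; omega) j i
  rw [Set.mem_Ico] at hj'
  rw [hj] at h ⊢
  rcases (hw.adj_iff hj'.1 hj'.2).1 h with rfl | h'
  · exact Or.inr rfl
  · rw [show j' = i - 1 + n by omega, hw.periodic]
    exact Or.inl rfl

lemma eq_of_adj_of_adj (hw : IsShortestCycle G n w) (hn : 5 ≤ n)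
    {x : V} (hx : x ∉ Set.range w) {i j : ℤ} (hij : i ≤ j) (hji : j < i + n)
    (hxi : G.Adj x (w i)) (hxj : G.Adj x (w j)) : i = j := by
  obtain ⟨d, rfl⟩ : ∃ d : ℕ, j = i + d := ⟨(j - i).toNat, by omega⟩
  by_contra hd₀
  have hq : IsDetour G w i d 2 fun t => if t = 0 then w i else if t = 1 then x else w (i + d) := by
    refine ⟨rfl, rfl, fun t ht => ?_, fun t h₀ h₂ => ?_, by omega⟩
    · interval_cases t
      · simpa using hxi.symm
      · simpa using hxj
    · obtain rfl : t = 1 := by omega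
      simpa using hx
  have h₁ := hq.le_of_isShortestCycle hw (by omega) two_pos (by omega)
  have h₂ := hq.le_of_isShortestCycle' hw (by omega) (by omega) two_pos (by omega)
  omega

lemma not_adj_of_adj_of_adj (hw : IsShortestCycle G n w)
    (hn : 7 ≤ n) {x y : V} (hx : x ∉ Set.range w) (hy : y ∉ Set.range w) {i j : ℤ} (hij : i ≤ j)
    (hji : j < i + n) (hxi : G.Adj x (w i)) (hyj : G.Adj y (w j)) : ¬ G.Adj x y := by
  intro hxy
  obtain ⟨d, rfl⟩ : ∃ d : ℕ, j = i + d := ⟨(j - i).toNat, by omega⟩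
  have hq : IsDetour G w i d 3 fun t =>
      if t = 0 then w i else if t = 1 then x else if t = 2 then y else w (i + d) := by
    refine ⟨rfl, rfl, fun t ht => ?_, fun t h₀ h₃ => ?_, fun a b ha ha' hb hb' h => ?_⟩
    · interval_cases t
      · simpa using hxi.symm
      · simpa using hxy
      · simpa using hyj
    · interval_cases t
      · simpa using hx
      · simpa using hy
    · interval_cases a <;> interval_cases b <;> simp_all [G.ne_of_adj hxy]
  have h₁ := hq.le_of_isShortestCycle hw (by omega) three_pos (by omega)
  rcases Nat.eq_zero_or_pos d with rfl | hd₀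
  · omega
  have h₂ := hq.le_of_isShortestCycle' hw hd₀ (by omega) three_pos (by omega)
  omega

lemma hasInducedCycle (hw : IsShortestCycle G n w) :
    HasInducedCycle G n := by
  have hn := hw.three_le
  refine ⟨⟨fun i => w i, fun i j h => Fin.ext ?_⟩, fun i j => ?_⟩
  · have := hw.eq_of_apply_eq (a := 0) (by omega) (by omega) h
    omega
  have hmod : ∀ k < n, (k + 1) % n = if k + 1 = n then 0 else k + 1 := fun k hk => by
    split_ifs with h
    · rw [h, Nat.mod_self]
    · exact Nat.mod_eq_of_lt (by omega)
  have := i.2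
  have := j.2
  show G.Adj (w i) (w j) ↔ _
  rw [hmod i i.2, hmod j j.2]
  rcases le_total (i : ℕ) j with h | h
  · rw [hw.adj_iff (by exact_mod_cast h) (by omega)]
    split_ifs <;> omega
  · rw [G.adj_comm, hw.adj_iff (by exact_mod_cast h) (by omega)]
    split_ifs <;> omega

lemma adj_iff_of_near (hw : IsShortestCycle G n w) {c i j : ℤ}
    (hi : c ≤ i ∧ i + 2 ≤ c + n) (hj : c ≤ j ∧ j + 2 ≤ c + n) :
    G.Adj (w i) (w j) ↔ j = i + 1 ∨ i = j + 1 := by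
  rcases le_total i j with h | h
  · rw [hw.adj_iff h (by omega)]; omega
  · rw [G.adj_comm, hw.adj_iff h (by omega)]; omega

lemma adj_iff_of_adj (hw : IsShortestCycle G n w) (hn : 5 ≤ n)
    {x : V} (hx : x ∉ Set.range w) {b c i : ℤ} (hxb : G.Adj x (w b)) (hb : c ≤ b ∧ b < c + n)
    (hi : c ≤ i ∧ i < c + n) : G.Adj x (w i) ↔ i = b := by
  refine ⟨fun hxi => ?_, fun h => h ▸ hxb⟩
  rcases le_total i b with h | h
  · exact hw.eq_of_adj_of_adj hn hx h (by omega) hxi hxb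
  · exact (hw.eq_of_adj_of_adj hn hx h (by omega) hxb hxi).symm

lemma hasInducedCopy_hGraph (hw : IsShortestCycle G n w)
    (hn : 7 ≤ n) {x y : V} (hx : x ∉ Set.range w) (hy : y ∉ Set.range w) {a : ℤ} {d : ℕ}
    (hd : 1 ≤ d) (hdn : d + 4 ≤ n) (hxa : G.Adj x (w a)) (hyd : G.Adj y (w (a + d))) :
    HasInducedCopy G (hGraph (d + 1)) := by
  have hww : ∀ i j : ℤ, a - 1 ≤ i → i ≤ a + d + 1 → a - 1 ≤ j → j ≤ a + d + 1 →
      (G.Adj (w i) (w j) ↔ j = i + 1 ∨ i = j + 1) := fun i j hi hi' hj hj' =>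
    hw.adj_iff_of_near (c := a - 1) (by omega) (by omega)
  have hxw : ∀ i : ℤ, a - 1 ≤ i → i ≤ a + d + 1 → (G.Adj x (w i) ↔ i = a) := fun i hi hi' =>
    hw.adj_iff_of_adj (by omega) hx hxa (c := a - 1) (by omega) (by omega)
  have hyw : ∀ i : ℤ, a - 1 ≤ i → i ≤ a + d + 1 → (G.Adj y (w i) ↔ i = a + d) :=
    fun i hi hi' => hw.adj_iff_of_adj (by omega) hy hyd (c := a - 1) (by omega) (by omega)
  have hxy : ¬ G.Adj x y :=
    hw.not_adj_of_adj_of_adj hn hx hy (by omega) (by omega) hxa hyd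
  have hxy' : x ≠ y := by
    rintro rfl
    have := (hxw (a + d) (by omega) (by omega)).1 hyd
    omega
  set F := hGraphMap w x y a d
  have hlr : ∀ (i : Fin (d + 1)) (t : Fin 4),
      G.Adj (F (.inl i)) (F (.inr t)) ↔ (hGraph (d + 1)).Adj (.inl i) (.inr t) := by
    intro i t
    have := i.2
    rw [hGraph_adj_inl_inr]
    fin_cases t <;> simp (disch := omega) [F, hGraphMap, G.adj_comm _ x, G.adj_comm _ y, hxw,
      hyw, hww] <;> omega
  refine ⟨⟨F, hw.hGraphMap_injective hx hy hxy' (by omega)⟩, fun A B => ?_⟩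
  show G.Adj (F A) (F B) ↔ _
  rcases A with i | t <;> rcases B with j | t'
  · have := i.2; have := j.2
    simp (disch := omega) [F, hGraphMap, hww, hGraph_adj_inl_inl]
    omega
  · exact hlr i t'
  · rw [G.adj_comm, (hGraph _).adj_comm]
    exact hlr j t
  · simp only [hGraph_not_adj_inr_inr, iff_false]
    fin_cases t <;> fin_cases t' <;> simp (disch := omega) [F, hGraphMap, hxw, hyw, hww, hxy,
      G.adj_comm _ x, G.adj_comm _ y] <;> omega

lemma exists_window {m : ℕ} (hw : IsShortestCycle G n w)
    (hm : 1 ≤ m) (hn : 3 * m + 4 ≤ n)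
    (hH : ∀ j, 1 ≤ j → j ≤ 3 * m + 3 → ¬ HasInducedCopy G (hGraph j)) :
    ∃ s : ℤ, ∀ k : ℤ, 1 ≤ k → k ≤ 3 * m + 2 → ∀ y, G.Adj (w (s + k)) y → y ∈ Set.range w := by
  by_cases hsp : ∃ s x, G.Adj (w s) x ∧ x ∉ Set.range w
  · obtain ⟨s, x, hxs, hx⟩ := hsp
    refine ⟨s, fun k hk hk' y hy => ?_⟩
    by_contra hyr
    obtain ⟨k, rfl⟩ : ∃ k' : ℕ, k = k' := ⟨k.toNat, by omega⟩
    -- `x` and `y` span an induced `H` along the shorter arc between `s` and `s + k`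
    rcases le_or_gt (2 * k) n with h2k | h2k
    · exact hH (k + 1) (by omega) (by omega)
        (hw.hasInducedCopy_hGraph (by omega) hx hyr (by omega) (by omega) hxs.symm hy.symm)
    · refine hH (n - k + 1) (by omega) (by omega)
        (hw.hasInducedCopy_hGraph (by omega) hyr hx (a := s + k) (by omega) (by omega)
          hy.symm ?_)
      rw [show s + k + ((n - k : ℕ) : ℤ) = s + n by omega, hw.periodic]
      exact hxs.symm
  · push Not at hsp
    exact ⟨0, fun k _ _ y hy => hsp _ y hy⟩

lemma apart (hw : IsShortestCycle G n w) {i j : ℤ}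
    (hij : i + 3 ≤ j) (hji : j + 3 ≤ i + n) : Apart G s(w i, w (i + 1)) s(w j, w (j + 1)) := by
  have key : ∀ p q : ℤ, i ≤ p → p ≤ i + 1 → j ≤ q → q ≤ j + 1 → w p ≠ w q ∧ ¬ G.Adj (w p) (w q) :=
    fun p q hp hp' hq hq' => ⟨fun h => by
      have := hw.eq_of_apply_eq (a := i) (by omega) (by omega) h; omega,
      by rw [hw.adj_iff (by omega) (by omega)]; omega⟩
  intro a ha b hb
  rcases Sym2.mem_iff.1 ha with rfl | rfl <;> rcases Sym2.mem_iff.1 hb with rfl | rfl <;>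
    exact key _ _ (by omega) (by omega) (by omega) (by omega)

lemma edgeSet_inter_touching_subset (hw : IsShortestCycle G n w)
    {r : ℤ} (hwin : ∀ k : ℤ, 1 ≤ k → k ≤ r → ∀ y, G.Adj (w k) y → y ∈ Set.range w) :
    G.edgeSet ∩ touching (w '' Set.Icc 1 r) ⊆ (fun k => s(w k, w (k + 1))) '' Set.Icc 0 r := by
  rintro e ⟨he, v, hv, k, ⟨hk, hk'⟩, rfl⟩
  obtain ⟨y, rfl⟩ : ∃ y, e = s(w k, y) := ⟨_, (Sym2.other_spec hv).symm⟩
  obtain ⟨t, rfl⟩ := hwin k hk hk' y he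
  rcases hw.eq_or_eq_of_adj he with h | h <;> rw [h]
  · exact ⟨k - 1, ⟨by omega, by omega⟩, by simp [Sym2.eq_swap]⟩
  · exact ⟨k, ⟨by omega, hk'⟩, rfl⟩

/-- The matching is every third edge of the path `w 0, …, w (3m + 3)`. -/
lemma isReducer_of_window {m : ℕ} (hw : IsShortestCycle G n w)
    (hn : 3 * m + 4 ≤ n)
    (hwin : ∀ k : ℤ, 1 ≤ k → k ≤ 3 * m + 2 → ∀ y, G.Adj (w k) y → y ∈ Set.range w) :
    IsReducer m G (w '' Set.Icc 1 (3 * m + 2)) := by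
  set Z := w '' Set.Icc (1 : ℤ) (3 * m + 2)
  set E : ℤ → Sym2 V := fun k => s(w k, w (k + 1))
  have hwZ : ∀ k : ℤ, 1 ≤ k → k ≤ 3 * m + 2 → w k ∈ Z := fun k h h' => ⟨k, ⟨h, h'⟩, rfl⟩
  have hTapart : ∀ i : ℕ, i < m → ∀ j : ℕ, j < m → i ≠ j →
      Apart G (E (3 * i + 2)) (E (3 * j + 2)) := by
    intro i hi j hj hij
    rcases lt_or_gt_of_ne hij with h | h
    · exact hw.apart (by omega) (by omega)
    · exact (hw.apart (by omega) (by omega)).symm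
  refine ⟨⟨E 1, hw.adj 1, w 1, Sym2.mem_mk_left _ _, hwZ 1 le_rfl (by omega)⟩, m + 1,
    (Finset.range m).image fun i : ℕ => E (3 * i + 2),
    (starColorableOn_walk hw.adj m).subset (hw.edgeSet_inter_touching_subset hwin), ?_, ?_, ?_, ?_⟩
  · simp only [Finset.coe_image, Finset.coe_range, Set.image_subset_iff]
    intro i hi
    exact ⟨hw.adj _, w (3 * i + 2), Sym2.mem_mk_left _ _, hwZ _ (by omega) (by simp at hi; omega)⟩
  · simp only [Finset.coe_image, Finset.coe_range]
    rintro _ ⟨i, hi, rfl⟩ _ ⟨j, hj, rfl⟩ hij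
    exact hTapart i hi j hj (fun h => hij (by rw [h]))
  · simp only [Finset.mem_image, Finset.mem_range]
    rintro _ ⟨i, hi, rfl⟩ f ⟨hf, hfZ⟩ a ha b hb
    have hbZ : b ∉ Z := fun h => hfZ ⟨b, hb, h⟩
    obtain ⟨p, hp, hp', rfl⟩ : ∃ p : ℤ, 2 ≤ p ∧ p ≤ 3 * m + 1 ∧ a = w p := by
      rcases Sym2.mem_iff.1 ha with rfl | rfl
      · exact ⟨_, by omega, by omega, rfl⟩
      · exact ⟨_, by omega, by omega, rfl⟩
    refine ⟨fun h => hbZ (h ▸ hwZ p (by omega) (by omega)), fun h => hbZ ?_⟩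
    obtain ⟨t, rfl⟩ := hwin p (by omega) (by omega) b h
    rcases hw.eq_or_eq_of_adj h with h' | h' <;> rw [h'] <;> exact hwZ _ (by omega) (by omega)
  · rw [Finset.card_image_of_injOn, Finset.card_range, mul_comm]
    intro i hi j hj h
    by_contra hij
    exact (hTapart i (by simpa using hi) j (by simpa using hj) hij).ne h

end IsShortestCycle

lemma exists_isReducer_of_hasCycle {m : ℕ} (hm : 1 ≤ m) (hG : InLozinClass m G)
    (h : ∃ n, HasCycle G n) : ∃ Z, IsReducer m G Z := by
  obtain ⟨n, w, hw⟩ := exists_isShortestCycle h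
  have hlong : 3 * m + 4 ≤ n := by
    by_contra!
    exact hG.1 _ hw.three_le (by omega) hw.hasInducedCycle
  obtain ⟨s, hs⟩ := hw.exists_window hm hlong hG.2
  refine ⟨_, (hw.comp_add s).isReducer_of_window hlong fun k hk hk' y hy => ?_⟩
  obtain ⟨t, rfl⟩ := hs k hk hk' y hy
  exact ⟨t - s, by simp⟩

theorem starRatioBound [Fintype V] {m : ℕ} (hm : 1 ≤ m) (G : SimpleGraph V)
    (hG : InLozinClass m G) : StarRatioBound m G := by
  induction G using WellFoundedLT.induction with | _ G ih => ?_
  rcases G.edgeSet.eq_empty_or_nonempty with hE | hE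
  · exact ⟨0, ∅, ⟨fun _ => 0, by simp [hE], by simp [hE]⟩, by simp, by simp, by simp⟩
  obtain ⟨Z, hZ⟩ : ∃ Z, IsReducer m G Z := by
    by_cases hcyc : ∃ n, HasCycle G n
    · exact exists_isReducer_of_hasCycle hm hG hcyc
    · obtain ⟨x₀, x₁, x₂, h⟩ := exists_isLeafFan hE (not_exists.1 hcyc)
      exact ⟨_, h.isReducer m⟩
  exact hZ.starRatioBound (ih _ (deleteEdges_touching_lt hZ) (hG.deleteEdges_touching Z))

end LozinStar

theorem lozin_class_chromNum_star_bound_general {V : Type} [Fintype V] (m : ℕ)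
    (G : SimpleGraph V)
    (hcyc : ∀ n, 3 ≤ n → n ≤ 3 * m + 3 → ¬ HasInducedCycle G n)
    (hH : ∀ j, 1 ≤ j → j ≤ 3 * m + 3 → ¬ HasInducedCopy G (hGraph j)) :
    m * chromNum (starGraph G) ≤ (m + 1) * cliqueNum (starGraph G) := by
  rcases Nat.eq_zero_or_pos m with rfl | hm
  · simp
  obtain ⟨k, s, hk, hsG, hs, hks⟩ := LozinStar.starRatioBound hm G ⟨hcyc, hH⟩
  calc m * chromNum (starGraph G)
      ≤ m * k := Nat.mul_le_mul_left m (LozinStar.chromNum_starGraph_le hk)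
    _ ≤ (m + 1) * s.card := hks
    _ ≤ (m + 1) * cliqueNum (starGraph G) :=
      Nat.mul_le_mul_left _ (LozinStar.card_le_cliqueNum_starGraph hsG hs)

/-- If `m ≥ 1` and `G` is a bipartite graph of maximum degree
at most `3` with no induced cycle `C_k` for `3 ≤ k ≤ 3m+3` and no induced `H_j`
for `1 ≤ j ≤ 3m+3`, then `χ(G*) ≤ ((m+1)/m)·ω(G*)`. -/
theorem lozin_class_chromNum_star_bound {V : Type} [Fintype V] (m : ℕ) (hm : 1 ≤ m)
    (G : SimpleGraph V) (hbip : G.Colorable 2) (hdeg : ∀ v : V, G.degree v ≤ 3)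
    (hcyc : ∀ n, 3 ≤ n → n ≤ 3 * m + 3 → ¬ HasInducedCycle G n)
    (hH : ∀ j, 1 ≤ j → j ≤ 3 * m + 3 → ¬ HasInducedCopy G (hGraph j)) :
    m * chromNum (starGraph G) ≤ (m + 1) * cliqueNum (starGraph G) :=
  lozin_class_chromNum_star_bound_general m G hcyc hH
end
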